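/- If the machine M is FTA-compliant with the downgrader architectural specification (DG, C_DG) and π(p) is a non-trivial proposition about C, P, and H activity after the last D action, then for every α ∈ A*, M,π,α ⊨ ¬K_L p. -/

import Mathlib

structure Machine (S A D O : Type) where
  s0 : S
  step : S → A → S
  dom : A → D
  obs : D → S → O

namespace Machine

def run {S A D O : Type} (M : Machine S A D O) (α : List A) : S :=
  α.foldl M.step M.s0

end Machine
/-- Elements of a view: actions or (group) observations. -/
inductive VE (A O' : Type) where
  | act : A → VE A O'
  | obs : O' → VE A O'

open Classical in
/-- Absorptive concatenation: `σ ∘ x` is `σ` if `x` equals the last element of `σ`,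
and `σ ++ [x]` otherwise. -/
noncomputable def absorb {X : Type} (σ : List X) (x : X) : List X :=
  if σ.getLast? = some x then σ else σ ++ [x]

open Classical in
/-- View of a group `G`, computed on the reversed action sequence. -/
noncomputable def viewR {S A D O : Type} (M : Machine S A D O) (G : Set D) :
    List A → List (VE A (G → O))
  | [] => [VE.obs (fun u : G => M.obs u.1 M.s0)]
  | a :: ρ =>
    let o : VE A (G → O) := VE.obs (fun u : G => M.obs u.1 (M.run ((a :: ρ).reverse)))
    if M.dom a ∈ G then viewR M G ρ ++ [VE.act a, o] else absorb (viewR M G ρ) o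

/-- The view of group `G` of the action sequence `α`. -/
noncomputable def view {S A D O : Type} (M : Machine S A D O) (G : Set D) (α : List A) :
    List (VE A (G → O)) :=
  viewR M G α.reverse
/-- Formulas of the epistemic logic (without distributed knowledge). -/
inductive Formula (PC D : Type) where
  | tru : Formula PC D
  | atom : PC → Formula PC D
  | neg : Formula PC D → Formula PC D
  | conj : Formula PC D → Formula PC D → Formula PC D
  | know : Set D → Formula PC D → Formula PC D

/-- Satisfaction relation `M,π,α ⊨ φ`. -/
def sat {S A D O PC : Type} (M : Machine S A D O) (π : PC → Set (List A)) :
    List A → Formula PC D → Prop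
  | _, .tru => True
  | α, .atom p => α ∈ π p
  | α, .neg φ => ¬ sat M π α φ
  | α, .conj φ ψ => sat M π α φ ∧ sat M π α ψ
  | α, .know G φ => ∀ α', view M G α' = view M G α → sat M π α' φ
/-- An extended architecture: `edge u v = none` means no edge, `edge u v = some none`
means an edge labelled `⊤`, and `edge u v = some (some f)` means an edge labelled by
the filter-function name `f`.  There is at most one label per ordered pair by
construction, and the relation is reflexive with label `⊤`. -/
structure ExtArch (D L : Type) where
  edge : D → D → Option (Option L)
  refl : ∀ u, edge u u = some none

/-- Values of the `tf` function and of filter-function interpretations: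
`eps` is the empty value ε, `base v` an arbitrary basic value, and
`pair σ a` the pair `(σ, a)` of a `tf` value and an action. -/
inductive TFVal (A V : Type) where
  | eps : TFVal A V
  | base : V → TFVal A V
  | pair : List (TFVal A V) → A → TFVal A V

/-- `σ ⌢ x`: appends `x` as a single new last element unless `x = ε`. -/
def snoc' {A V : Type} (σ : List (TFVal A V)) : TFVal A V → List (TFVal A V)
  | .eps => σ
  | x => σ ++ [x]

/-- `tf`, computed on the reversed action sequence. -/
def tfR {A D L V : Type} (Arch : ExtArch D L) (dm : A → D)
    (I : L → List A → A → TFVal A V) : List A → D → List (TFVal A V)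
  | [], _ => []
  | a :: ρ, u =>
    match Arch.edge (dm a) u with
    | none => tfR Arch dm I ρ u
    | some none => tfR Arch dm I ρ u ++ [TFVal.pair (tfR Arch dm I ρ (dm a)) a]
    | some (some f) => snoc' (tfR Arch dm I ρ u) (I f ρ.reverse a)

/-- `tf Arch dm I α u` : maximal information domain `u` is permitted to have after `α`. -/
def tf {A D L V : Type} (Arch : ExtArch D L) (dm : A → D)
    (I : L → List A → A → TFVal A V) (α : List A) (u : D) : List (TFVal A V) :=
  tfR Arch dm I α.reverse u

/-- `inF Arch dm I α a u` : the information `in_{dom(a),u}(α, a)` transmitted to `u`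
when action `a` is performed after `α`. -/
def inF {A D L V : Type} (Arch : ExtArch D L) (dm : A → D)
    (I : L → List A → A → TFVal A V) (α : List A) (a : A) (u : D) : TFVal A V :=
  match Arch.edge (dm a) u with
  | none => TFVal.eps
  | some none => TFVal.pair (tf Arch dm I α (dm a)) a
  | some (some f) => I f α a
/-- FTA-compliance of a machine with an interpreted extended architecture
(whose actions, domains and domain function are those of the machine). -/
def FTACompliant {S A D O L V : Type} (M : Machine S A D O) (Arch : ExtArch D L)
    (I : L → List A → A → TFVal A V) : Prop :=
  ∀ (u : D) (α α' : List A), tf Arch M.dom I α u = tf Arch M.dom I α' u →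
    M.obs u (M.run α) = M.obs u (M.run α')
/-- The five domains of the downgrader architecture `DG` (`Dg` is the
downgrader `D`, `Lo` the low-security domain `L`). -/
inductive DGDom where
  | C : DGDom
  | P : DGDom
  | H : DGDom
  | Dg : DGDom
  | Lo : DGDom
deriving DecidableEq

/-- The downgrader extended architecture: reflexive `⊤`-edges, `C ↝_⊤ H`,
`P ↝_⊤ H`, `H ↝_⊤ D` and `D ↝_rel L` (the label set is `Unit`, with `()`
standing for `rel`). -/
def DGArch : ExtArch DGDom Unit where
  edge u v :=
    match u, v with
    | .C, .C => some none
    | .P, .P => some none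
    | .H, .H => some none
    | .Dg, .Dg => some none
    | .Lo, .Lo => some none
    | .C, .H => some none
    | .P, .H => some none
    | .H, .Dg => some none
    | .Dg, .Lo => some (some ())
    | _, _ => none
  refl u := by cases u <;> rfl

/-- The policy `↝′`: `(u,v,f) ∈ ↝′` iff `f = ⊤` and either `u = v = C` or
there is an edge `(u,v,g)` in `DG` with `{u,v} ⊆ {P,H,D,L}`. -/
def DGArch' : ExtArch DGDom Unit where
  edge u v :=
    if (u = DGDom.C ∧ v = DGDom.C) ∨
        ((DGArch.edge u v).isSome = true ∧ u ≠ DGDom.C ∧ v ≠ DGDom.C)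
    then some none else none
  refl u := by cases u <;> decide

/-- Membership in the downgrader architectural specification `C_DG`: the
filter function `rel` transmits `(tf_D^{↝′}(α), a)`. -/
def memCDG {A V : Type} (dm : A → DGDom) (I : Unit → List A → A → TFVal A V) :
    Prop :=
  ∀ (α : List A) (a : A), dm a = DGDom.Dg →
    I () α a = TFVal.pair (tf DGArch' dm I α DGDom.Dg) a

/-- `F(α)`: the `C`, `P` and `H` actions of `α` occurring after the last `D`
action. -/
def Fafter {A : Type} (dm : A → DGDom) (α : List A) : List A :=
  α.foldl (fun acc a =>
    if dm a = DGDom.Dg then []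
    else if dm a = DGDom.C ∨ dm a = DGDom.P ∨ dm a = DGDom.H then acc ++ [a]
    else acc) []

/-- A proposition about `C`, `P` and `H` activity after the last `D` action. -/
def AboutAfterLastD {A : Type} (dm : A → DGDom) (X : Set (List A)) : Prop :=
  ∃ Y : Set (List A), ∀ α : List A, α ∈ X ↔ Fafter dm α ∈ Y

/-!
Actions of `C`, `P` and `H` have no edge to `L`, so under FTA-compliance they change neither
`tf_L` nor `L`'s observation, and hence not `L`'s view. Given any `α` and any target `δ` of
`C`/`P`/`H` actions, build `α'` by induction on `α`, keeping `view_L` and `tf_L` equal to those of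
`α` and `F(α') = δ`: skip `C`/`P`/`H` actions, replay `L` actions (FTA-compliance turns equal
`tf_L` into equal observations), and after a `D` action append `δ`, which resets `F` to `δ`.
Taking `δ = F(α₀)` for some `α₀ ∉ π(p)` gives an `L`-indistinguishable `α' ∉ π(p)`.
-/

section General

variable {S A D O L V : Type}

lemma absorb_getLast? {X : Type} (σ : List X) (x : X) :
    (absorb σ x).getLast? = some x := by
  unfold absorb
  split
  · assumption
  · simp

lemma viewR_getLast? (M : Machine S A D O) (G : Set D) (ρ : List A) :
    (viewR M G ρ).getLast? = some (VE.obs (fun u : G => M.obs u.1 (M.run ρ.reverse))) := by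
  cases ρ with
  | nil => simp [viewR, Machine.run]
  | cons a ρ =>
    rw [viewR]
    split
    · simp
    · exact absorb_getLast? _ _

lemma view_append_singleton_of_not_mem (M : Machine S A D O) (G : Set D) (α : List A) (a : A)
    (ha : M.dom a ∉ G)
    (hobs : ∀ u ∈ G, M.obs u (M.run (α ++ [a])) = M.obs u (M.run α)) :
    view M G (α ++ [a]) = view M G α := by
  have ho : (fun u : G => M.obs u.1 (M.run (a :: α.reverse).reverse))
      = (fun u : G => M.obs u.1 (M.run α.reverse.reverse)) := by
    funext u
    simpa using hobs u.1 u.2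
  simp only [view, List.reverse_append, List.reverse_singleton, List.singleton_append, viewR,
    if_neg ha, ho, absorb, viewR_getLast?, if_true]

lemma view_append_singleton_of_mem (M : Machine S A D O) (G : Set D) (α : List A) (a : A)
    (ha : M.dom a ∈ G) :
    view M G (α ++ [a]) = view M G α ++
      [VE.act a, VE.obs (fun u : G => M.obs u.1 (M.run (α ++ [a])))] := by
  simp [view, viewR, if_pos ha]

lemma tf_append_singleton (Arch : ExtArch D L) (dm : A → D) (I : L → List A → A → TFVal A V)
    (α : List A) (a : A) (u : D) :
    tf Arch dm I (α ++ [a]) u =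
      match Arch.edge (dm a) u with
      | none => tf Arch dm I α u
      | some none => tf Arch dm I α u ++ [TFVal.pair (tf Arch dm I α (dm a)) a]
      | some (some f) => snoc' (tf Arch dm I α u) (I f α a) := by
  simp only [tf, List.reverse_append, List.reverse_singleton, List.singleton_append, tfR,
    List.reverse_reverse]

lemma tf_append_of_edge_eq_none (Arch : ExtArch D L) (dm : A → D)
    (I : L → List A → A → TFVal A V) (α δ : List A) (u : D)
    (hδ : ∀ a ∈ δ, Arch.edge (dm a) u = none) :
    tf Arch dm I (α ++ δ) u = tf Arch dm I α u := by
  induction δ using List.reverseRecOn with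
  | nil => simp
  | append_singleton δ a ih =>
    rw [← List.append_assoc, tf_append_singleton, hδ a (by simp),
      ih fun b hb => hδ b (by simp [hb])]

lemma tf_append_singleton_of_edge_eq_top (Arch : ExtArch D L) (dm : A → D)
    (I : L → List A → A → TFVal A V) (α : List A) (a : A) (u : D)
    (h : Arch.edge (dm a) u = some none) :
    tf Arch dm I (α ++ [a]) u
      = tf Arch dm I α u ++ [TFVal.pair (tf Arch dm I α (dm a)) a] := by
  rw [tf_append_singleton, h]

namespace FTACompliant

variable {M : Machine S A D O} {Arch : ExtArch D L} {I : L → List A → A → TFVal A V}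

/-- Reflexivity of the policy makes `dom a ∉ G` part of the hypothesis. -/
lemma view_append_of_edge_eq_none (hFTA : FTACompliant M Arch I) (G : Set D) (α δ : List A)
    (hδ : ∀ a ∈ δ, ∀ u ∈ G, Arch.edge (M.dom a) u = none) :
    view M G (α ++ δ) = view M G α := by
  induction δ using List.reverseRecOn with
  | nil => simp
  | append_singleton δ a ih =>
    have ha : ∀ u ∈ G, Arch.edge (M.dom a) u = none := hδ a (by simp)
    have hnot : M.dom a ∉ G := fun hmem => by simpa [Arch.refl] using ha _ hmem
    have hobs : ∀ u ∈ G, M.obs u (M.run (α ++ δ ++ [a])) = M.obs u (M.run (α ++ δ)) :=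
      fun u hu => hFTA u _ _
        (tf_append_of_edge_eq_none Arch M.dom I _ [a] u (by simpa using ha u hu))
    rw [← List.append_assoc, view_append_singleton_of_not_mem M G _ a hnot hobs,
      ih fun b hb => hδ b (by simp [hb])]

lemma view_append_singleton_congr (hFTA : FTACompliant M Arch I) (G : Set D) {α α' : List A}
    (a : A) (ha : M.dom a ∈ G) (hview : view M G α' = view M G α)
    (htf : ∀ u ∈ G, tf Arch M.dom I (α' ++ [a]) u = tf Arch M.dom I (α ++ [a]) u) :
    view M G (α' ++ [a]) = view M G (α ++ [a]) := by
  rw [view_append_singleton_of_mem M G _ a ha, view_append_singleton_of_mem M G _ a ha, hview]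
  exact congrArg (fun o => view M G α ++ [VE.act a, VE.obs o])
    (funext fun u : G => hFTA u.1 _ _ (htf u.1 u.2))

end FTACompliant

end General

section Downgrader

variable {S A O V : Type}

abbrev DGDom.IsCPH (d : DGDom) : Prop :=
  d = .C ∨ d = .P ∨ d = .H

lemma DGDom.IsCPH.DGArch_edge_Lo {d : DGDom} (h : d.IsCPH) : DGArch.edge d .Lo = none := by
  rcases h with rfl | rfl | rfl <;> rfl

lemma Fafter_append_singleton (dm : A → DGDom) (α : List A) (a : A) :
    Fafter dm (α ++ [a]) =
      if dm a = .Dg then []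
      else if (dm a).IsCPH then Fafter dm α ++ [a]
      else Fafter dm α := by
  simp only [Fafter, List.foldl_append, List.foldl_cons, List.foldl_nil]

lemma Fafter_append_of_forall_IsCPH (dm : A → DGDom) (α δ : List A)
    (hδ : ∀ a ∈ δ, (dm a).IsCPH) :
    Fafter dm (α ++ δ) = Fafter dm α ++ δ := by
  induction δ using List.reverseRecOn with
  | nil => simp
  | append_singleton δ a ih =>
    have ha : (dm a).IsCPH := hδ a (by simp)
    have hne : dm a ≠ .Dg := by rcases ha with h | h | h <;> rw [h] <;> decide
    rw [← List.append_assoc, Fafter_append_singleton, if_neg hne, if_pos ha,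
      ih fun b hb => hδ b (by simp [hb]), List.append_assoc]

lemma forall_IsCPH_Fafter (dm : A → DGDom) (α : List A) :
    ∀ a ∈ Fafter dm α, (dm a).IsCPH := by
  induction α using List.reverseRecOn with
  | nil => simp [Fafter]
  | append_singleton α b ih =>
    rw [Fafter_append_singleton]
    split_ifs with hDg hb
    · simp
    · rintro c hc
      rcases List.mem_append.1 hc with hc | hc
      · exact ih c hc
      · rwa [List.mem_singleton.1 hc]
    · exact ih

lemma FTACompliant.exists_view_Lo_eq_tf_Lo_eq_Fafter_eq {M : Machine S A DGDom O}
    {I : Unit → List A → A → TFVal A V} (hFTA : FTACompliant M DGArch I) (δ : List A)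
    (hδ : ∀ a ∈ δ, (M.dom a).IsCPH) (α : List A) :
    ∃ α' : List A,
      view M {.Lo} α' = view M {.Lo} α ∧
      tf DGArch M.dom I α' .Lo = tf DGArch M.dom I α .Lo ∧
      Fafter M.dom α' = δ := by
  have hδLo : ∀ a ∈ δ, ∀ u ∈ ({.Lo} : Set DGDom), DGArch.edge (M.dom a) u = none := by
    rintro a ha u rfl
    exact (hδ a ha).DGArch_edge_Lo
  induction α using List.reverseRecOn with
  | nil =>
    refine ⟨δ, ?_, ?_, ?_⟩
    · simpa using hFTA.view_append_of_edge_eq_none {.Lo} [] δ hδLo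
    · simpa using tf_append_of_edge_eq_none DGArch M.dom I [] δ .Lo fun a ha => hδLo a ha _ rfl
    · simpa [Fafter] using Fafter_append_of_forall_IsCPH M.dom [] δ hδ
  | append_singleton α a ih =>
    obtain ⟨α', hview, htf, hF⟩ := ih
    rcases hdom : M.dom a with _ | _ | _ | _ | _
    case Dg =>
      refine ⟨α ++ [a] ++ δ, hFTA.view_append_of_edge_eq_none {.Lo} _ δ hδLo,
        tf_append_of_edge_eq_none DGArch M.dom I _ δ .Lo fun b hb => hδLo b hb _ rfl, ?_⟩
      rw [Fafter_append_of_forall_IsCPH M.dom _ δ hδ, Fafter_append_singleton, if_pos hdom,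
        List.nil_append]
    case Lo =>
      have hedge : DGArch.edge (M.dom a) .Lo = some none := by rw [hdom]; rfl
      have htf' : tf DGArch M.dom I (α' ++ [a]) .Lo = tf DGArch M.dom I (α ++ [a]) .Lo := by
        rw [tf_append_singleton_of_edge_eq_top _ _ _ _ _ _ hedge,
          tf_append_singleton_of_edge_eq_top _ _ _ _ _ _ hedge, hdom, htf]
      refine ⟨α' ++ [a], hFTA.view_append_singleton_congr {.Lo} a hdom hview ?_, htf', ?_⟩
      · rintro u rfl
        exact htf'
      · simp [Fafter_append_singleton, hdom, hF]
    all_goals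
      have hLo : ∀ b ∈ [a], ∀ u ∈ ({.Lo} : Set DGDom), DGArch.edge (M.dom b) u = none := by
        rintro b hb u rfl
        rw [List.mem_singleton.1 hb, hdom]
        rfl
      exact ⟨α', by rw [hview, hFTA.view_append_of_edge_eq_none {.Lo} α [a] hLo],
        by rw [htf, tf_append_of_edge_eq_none DGArch M.dom I α [a] .Lo fun b hb => hLo b hb _ rfl],
        hF⟩

end Downgrader

theorem statement11_general {S A O V PC : Type} (M : Machine S A DGDom O)
    (I : Unit → List A → A → TFVal A V)
    (hFTA : FTACompliant M DGArch I)
    (π : PC → Set (List A)) (p : PC)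
    (habout : AboutAfterLastD M.dom (π p))
    (hnuniv : π p ≠ (Set.univ : Set (List A))) :
    ∀ α : List A,
      sat M π α (Formula.neg (Formula.know {DGDom.Lo} (Formula.atom p))) := by
  intro α hknow
  obtain ⟨α₀, hα₀⟩ := (Set.ne_univ_iff_exists_notMem _).1 hnuniv
  obtain ⟨Y, hY⟩ := habout
  obtain ⟨α', hview, -, hF⟩ :=
    hFTA.exists_view_Lo_eq_tf_Lo_eq_Fafter_eq _ (forall_IsCPH_Fafter M.dom α₀) α
  have hα' : α' ∈ π p := hknow α' hview
  exact hα₀ ((hY α₀).2 (hF ▸ (hY α').1 hα'))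

/-- if `M` is FTA-compliant with `(DG, C_DG)` and `π(p)` is a
non-trivial proposition about `C`, `P` and `H` activity after the last `D`
action, then `M,π,α ⊨ ¬K_L p` for every `α`. -/
theorem statement11 {S A O V PC : Type} (M : Machine S A DGDom O)
    (I : Unit → List A → A → TFVal A V) (hI : memCDG M.dom I)
    (hFTA : FTACompliant M DGArch I)
    (π : PC → Set (List A)) (p : PC)
    (habout : AboutAfterLastD M.dom (π p))
    (hne : π p ≠ (∅ : Set (List A))) (hnuniv : π p ≠ (Set.univ : Set (List A))) :
    ∀ α : List A,
      sat M π α (Formula.neg (Formula.know {DGDom.Lo} (Formula.atom p))) :=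
  statement11_general M I hFTA π p habout hnuniv
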